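/- For every α, β ∈ ℂ, the cubics F₁ and F₂ satisfy S(F₁) = F₂, S(F₂) = F₁, T(F₁) = F₁ and T(F₂) = −F₂; in particular the span of {F₁, F₂} is invariant under S and T. -/

import Mathlib

open MvPolynomial

noncomputable section

abbrev R6 : Type := MvPolynomial (Fin 6) ℂ

/-- `ε = exp(2πi/6)`, a primitive 6th root of unity. -/
def ε : ℂ := Complex.exp (2 * Real.pi * Complex.I / 6)

/-- The Heisenberg generator `S`, the `ℂ`-algebra map with `S xᵢ = x_{i+1 mod 6}`. -/
def Sh : R6 →ₐ[ℂ] R6 := aeval fun i : Fin 6 => X (i + 1)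

/-- The Heisenberg generator `T`, the `ℂ`-algebra map with `T xᵢ = εⁱ xᵢ`. -/
def Tw : R6 →ₐ[ℂ] R6 := aeval fun i : Fin 6 => C (ε ^ (i : ℕ)) * X i

/-- The cubic `F₁`. -/
def F1 (α β : ℂ) : R6 :=
  C (2 * (α ^ 2 * β ^ 2 - α - β)) * (X 0 * X 2 * X 4)
    - C 2 * (X 0 ^ 3 + X 2 ^ 3 + X 4 ^ 3)
    + C (2 * (β - α)) * (X 1 * X 2 * X 3 + X 3 * X 4 * X 5 + X 5 * X 0 * X 1)
    + C (α * β * (β - α)) * (X 0 * X 3 ^ 2 + X 2 * X 5 ^ 2 + X 4 * X 1 ^ 2)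

/-- The cubic `F₂`. -/
def F2 (α β : ℂ) : R6 :=
  C (2 * (α ^ 2 * β ^ 2 - α - β)) * (X 1 * X 3 * X 5)
    - C 2 * (X 1 ^ 3 + X 3 ^ 3 + X 5 ^ 3)
    + C (2 * (β - α)) * (X 2 * X 3 * X 4 + X 4 * X 5 * X 0 + X 0 * X 1 * X 2)
    + C (α * β * (β - α)) * (X 1 * X 4 ^ 2 + X 3 * X 0 ^ 2 + X 5 * X 2 ^ 2)


/-!
`S` permutes the variables cyclically and visibly carries the monomials of `F₁` onto those of
`F₂` and back. `T` multiplies a monomial `xᵢ xⱼ x_k` by `ε^(i+j+k)`; the eigenspaces of the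
algebra map `T` multiply like the characters `ε^k`, every monomial of `F₁` has index sum
`≡ 0 (mod 6)` and every monomial of `F₂` index sum `≡ 3 (mod 6)`, and `ε³ = -1`.
-/

open Module.End

theorem AlgHom.mul_mem_eigenspace {K A : Type*} [CommRing K] [Ring A] [Algebra K A]
    (f : A →ₐ[K] A) {a b : K} {x y : A} (hx : x ∈ eigenspace f.toLinearMap a)
    (hy : y ∈ eigenspace f.toLinearMap b) : x * y ∈ eigenspace f.toLinearMap (a * b) := by
  rw [mem_eigenspace_iff] at hx hy ⊢
  simp only [AlgHom.toLinearMap_apply] at hx hy ⊢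
  rw [map_mul, hx, hy, smul_mul_smul_comm]

theorem Submodule.map_span_pair_le {K M : Type*} [Semiring K] [AddCommMonoid M] [Module K M]
    (f : M →ₗ[K] M) {a b : M} (ha : f a ∈ span K {a, b}) (hb : f b ∈ span K {a, b}) :
    (span K {a, b}).map f ≤ span K {a, b} :=
  (map_span_le f _ _).2 <| by simpa using ⟨ha, hb⟩

lemma ε_pow_three : ε ^ 3 = -1 := by
  rw [ε, ← Complex.exp_nat_mul, ← Complex.exp_pi_mul_I]
  push_cast
  ring_nf

lemma ε_pow_six : ε ^ 6 = 1 := by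
  rw [show 6 = 3 * 2 from rfl, pow_mul, ε_pow_three, neg_one_sq]

lemma Sh_C (c : ℂ) : Sh (C c) = C c := aeval_C _ _

lemma Sh_X (i : Fin 6) : Sh (X i) = X (i + 1) := aeval_X _ _

lemma Sh_F1 (α β : ℂ) : Sh (F1 α β) = F2 α β := by
  simp only [F1, F2, map_add, map_sub, map_mul, map_pow, Sh_X, Sh_C, Fin.reduceAdd]

lemma Sh_F2 (α β : ℂ) : Sh (F2 α β) = F1 α β := by
  simp only [F1, F2, map_add, map_sub, map_mul, map_pow, Sh_X, Sh_C, Fin.reduceAdd]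
  ring

/-- Indexing by `Fin 6` makes the weight of a monomial its index sum mod 6, by computation. -/
def twEigenspace (k : Fin 6) : Submodule ℂ R6 := eigenspace Tw.toLinearMap (ε ^ (k : ℕ))

namespace twEigenspace

lemma X_mem (i : Fin 6) : X i ∈ twEigenspace i := by
  rw [twEigenspace, mem_eigenspace_iff, ← C_mul']
  exact aeval_X _ _

lemma mul_mem {k l : Fin 6} {p q : R6} (hp : p ∈ twEigenspace k) (hq : q ∈ twEigenspace l) :
    p * q ∈ twEigenspace (k + l) := by
  rw [twEigenspace, Fin.val_add, ← pow_eq_pow_mod _ ε_pow_six, pow_add]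
  exact Tw.mul_mem_eigenspace hp hq

lemma pow_mem {k : Fin 6} {p : R6} (hp : p ∈ twEigenspace k) (n : ℕ) :
    p ^ n ∈ twEigenspace (n • k) := by
  induction n with
  | zero => simp [twEigenspace]
  | succ n ih => rw [pow_succ, succ_nsmul]; exact mul_mem ih hp

end twEigenspace

open twEigenspace in
lemma F1_mem_twEigenspace (α β : ℂ) : F1 α β ∈ twEigenspace 0 := by
  simp only [F1, C_mul']
  -- `(h :)` elaborates `h` alone, so its weight is computed before being compared with the goal's.
  refine add_mem (add_mem (sub_mem (Submodule.smul_mem _ _ ?_) (Submodule.smul_mem _ _ ?_))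
    (Submodule.smul_mem _ _ ?_)) (Submodule.smul_mem _ _ ?_)
  · exact (mul_mem (mul_mem (X_mem 0) (X_mem 2)) (X_mem 4) :)
  · refine add_mem (add_mem ?_ ?_) ?_
    exacts [(pow_mem (X_mem 0) 3 :), (pow_mem (X_mem 2) 3 :), (pow_mem (X_mem 4) 3 :)]
  · refine add_mem (add_mem ?_ ?_) ?_
    exacts [(mul_mem (mul_mem (X_mem 1) (X_mem 2)) (X_mem 3) :),
      (mul_mem (mul_mem (X_mem 3) (X_mem 4)) (X_mem 5) :),
      (mul_mem (mul_mem (X_mem 5) (X_mem 0)) (X_mem 1) :)]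
  · refine add_mem (add_mem ?_ ?_) ?_
    exacts [(mul_mem (X_mem 0) (pow_mem (X_mem 3) 2) :),
      (mul_mem (X_mem 2) (pow_mem (X_mem 5) 2) :), (mul_mem (X_mem 4) (pow_mem (X_mem 1) 2) :)]

open twEigenspace in
lemma F2_mem_twEigenspace (α β : ℂ) : F2 α β ∈ twEigenspace 3 := by
  simp only [F2, C_mul']
  refine add_mem (add_mem (sub_mem (Submodule.smul_mem _ _ ?_) (Submodule.smul_mem _ _ ?_))
    (Submodule.smul_mem _ _ ?_)) (Submodule.smul_mem _ _ ?_)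
  · exact (mul_mem (mul_mem (X_mem 1) (X_mem 3)) (X_mem 5) :)
  · refine add_mem (add_mem ?_ ?_) ?_
    exacts [(pow_mem (X_mem 1) 3 :), (pow_mem (X_mem 3) 3 :), (pow_mem (X_mem 5) 3 :)]
  · refine add_mem (add_mem ?_ ?_) ?_
    exacts [(mul_mem (mul_mem (X_mem 2) (X_mem 3)) (X_mem 4) :),
      (mul_mem (mul_mem (X_mem 4) (X_mem 5)) (X_mem 0) :),
      (mul_mem (mul_mem (X_mem 0) (X_mem 1)) (X_mem 2) :)]
  · refine add_mem (add_mem ?_ ?_) ?_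
    exacts [(mul_mem (X_mem 1) (pow_mem (X_mem 4) 2) :),
      (mul_mem (X_mem 3) (pow_mem (X_mem 0) 2) :), (mul_mem (X_mem 5) (pow_mem (X_mem 2) 2) :)]

lemma Tw_F1 (α β : ℂ) : Tw (F1 α β) = F1 α β := by
  simpa using mem_eigenspace_iff.1 (F1_mem_twEigenspace α β)

lemma Tw_F2 (α β : ℂ) : Tw (F2 α β) = -F2 α β := by
  simpa [ε_pow_three] using mem_eigenspace_iff.1 (F2_mem_twEigenspace α β)

/-- `S F₁ = F₂`, `S F₂ = F₁`, `T F₁ = F₁`, `T F₂ = −F₂`; in particular the span of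
`{F₁, F₂}` is invariant under `S` and `T`. -/
theorem heisenberg_action_on_cubics (α β : ℂ) :
    Sh (F1 α β) = F2 α β ∧ Sh (F2 α β) = F1 α β ∧
    Tw (F1 α β) = F1 α β ∧ Tw (F2 α β) = -F2 α β ∧
    Submodule.map Sh.toLinearMap (Submodule.span ℂ {F1 α β, F2 α β}) ≤
      Submodule.span ℂ {F1 α β, F2 α β} ∧
    Submodule.map Tw.toLinearMap (Submodule.span ℂ {F1 α β, F2 α β}) ≤
      Submodule.span ℂ {F1 α β, F2 α β} := by
  have mem₁ : F1 α β ∈ Submodule.span ℂ {F1 α β, F2 α β} := Submodule.subset_span (by simp)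
  have mem₂ : F2 α β ∈ Submodule.span ℂ {F1 α β, F2 α β} := Submodule.subset_span (by simp)
  refine ⟨Sh_F1 α β, Sh_F2 α β, Tw_F1 α β, Tw_F2 α β, ?_, ?_⟩
  · refine Submodule.map_span_pair_le _ ?_ ?_
    · rw [AlgHom.toLinearMap_apply, Sh_F1]; exact mem₂
    · rw [AlgHom.toLinearMap_apply, Sh_F2]; exact mem₁
  · refine Submodule.map_span_pair_le _ ?_ ?_
    · rw [AlgHom.toLinearMap_apply, Tw_F1]; exact mem₁
    · rw [AlgHom.toLinearMap_apply, Tw_F2]; exact neg_mem mem₂
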